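/- Let X be a pointed metric space. On the space Lip₀(X), regarded as the dual of the Banach space F(X), the bounded weak* topology τ_bw* (the largest topology on Lip₀(X) agreeing with the weak* topology σ(Lip₀(X), F(X)) on norm-bounded sets) coincides with the topology τ_γ. -/

import Mathlib

/-! On a norm-bounded subset of `Lip₀(X)` the weak* topology, the compact-open topology `τ₀` and
pointwise convergence on `X` all coincide: a bounded set is equicontinuous both as a family of
functions on `X` (Arzelà–Ascoli) and as a family of functionals on `F(X)`, in which the span of
the `δ_x` is dense. The mixed topology `τ_γ` also agrees with `τ₀` on a bounded set, because its
points that are `τ₀`-close to `f` lie in `f + Uₘ ∩ 2ᵐB ⊆ f + γ(U)` for `m` large.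

Conversely, let `t` agree with `τ₀` on bounded sets and let `s ∋ 0` be `t`-open, so that `s` is
relatively `τ₀`-open in every ball. Balls are `τ₀`-compact, and a compact subset `C` of a
`τ₀`-open set `V` satisfies `C + W ⊆ V` for some `τ₀`-neighbourhood `W` of zero. This lets one
choose convex balanced `τ₀`-neighbourhoods `Uₙ` inductively so that the compact sets
`closure (U₀) ∩ B + ⋯ + closure (Uₙ) ∩ 2ⁿB` stay inside `s`; then `γ(U) ⊆ s`. -/

open Filter Topology Set Pointwise

set_option linter.unusedSectionVars false
set_option linter.unusedVariables false

noncomputable section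

namespace LipApprox

variable (X : Type*) [MetricSpace X] (x₀ : X)
variable (F : Type*) [NormedAddCommGroup F] [NormedSpace ℝ F]

/-- The Lipschitz maps `X → F` vanishing at the base point, as a submodule of `X → F`. -/
def lip0Submodule : Submodule ℝ (X → F) where
  carrier := {f | (∃ K, LipschitzWith K f) ∧ f x₀ = 0}
  add_mem' := by
    rintro f g ⟨⟨Kf, hf⟩, hf0⟩ ⟨⟨Kg, hg⟩, hg0⟩
    exact ⟨⟨Kf + Kg, hf.add hg⟩, by simp [hf0, hg0]⟩
  zero_mem' := ⟨⟨0, LipschitzWith.const 0⟩, rfl⟩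
  smul_mem' := by
    rintro c f ⟨⟨K, hf⟩, hf0⟩
    exact ⟨⟨‖c‖₊ * K, (lipschitzWith_smul c).comp hf⟩, by simp [hf0]⟩

/-- The space `Lip₀(X, F)` of Lipschitz maps from `X` to `F` vanishing at the base point. -/
def lip0 : Type _ := ↥(lip0Submodule X x₀ F)

instance : AddCommGroup (lip0 X x₀ F) :=
  inferInstanceAs (AddCommGroup ↥(lip0Submodule X x₀ F))

instance : Module ℝ (lip0 X x₀ F) :=
  inferInstanceAs (Module ℝ ↥(lip0Submodule X x₀ F))

variable {X x₀ F}

/-- The underlying function of an element of `Lip₀(X, F)`. -/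
def toFun' (f : lip0 X x₀ F) : X → F := f.1

lemma exists_lip (f : lip0 X x₀ F) : ∃ K, LipschitzWith K (toFun' f) := f.2.1

lemma apply_base (f : lip0 X x₀ F) : toFun' f x₀ = 0 := f.2.2

lemma toFun'_add (f g : lip0 X x₀ F) : toFun' (f + g) = toFun' f + toFun' g := rfl
lemma toFun'_neg (f : lip0 X x₀ F) : toFun' (-f) = -toFun' f := rfl
lemma toFun'_smul (c : ℝ) (f : lip0 X x₀ F) : toFun' (c • f) = c • toFun' f := rfl
lemma toFun'_zero : toFun' (0 : lip0 X x₀ F) = 0 := rfl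

variable (X x₀ F) in
/-- The Lipschitz norm of an element of `Lip₀(X, F)`. -/
def lipNorm (f : lip0 X x₀ F) : ℝ :=
  ⨆ p : X × X, ‖toFun' f p.1 - toFun' f p.2‖ / dist p.1 p.2

lemma ratio_le (f : lip0 X x₀ F) {K : NNReal} (hK : LipschitzWith K (toFun' f))
    (p : X × X) : ‖toFun' f p.1 - toFun' f p.2‖ / dist p.1 p.2 ≤ K := by
  rcases eq_or_ne p.1 p.2 with h | h
  · simp [h]
  · rw [div_le_iff₀ (dist_pos.2 h), ← dist_eq_norm]
    exact hK.dist_le_mul p.1 p.2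

lemma bddAbove_ratio (f : lip0 X x₀ F) :
    BddAbove (Set.range fun p : X × X =>
      ‖toFun' f p.1 - toFun' f p.2‖ / dist p.1 p.2) := by
  obtain ⟨K, hK⟩ := exists_lip f
  exact ⟨K, by rintro r ⟨p, rfl⟩; exact ratio_le f hK p⟩

lemma nonempty_pairs (x₀ : X) : Nonempty (X × X) := ⟨(x₀, x₀)⟩

lemma ratio_le_lipNorm (f : lip0 X x₀ F) (p : X × X) :
    ‖toFun' f p.1 - toFun' f p.2‖ / dist p.1 p.2 ≤ lipNorm X x₀ F f :=
  le_ciSup (bddAbove_ratio f) p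

lemma lipNorm_nonneg (f : lip0 X x₀ F) : 0 ≤ lipNorm X x₀ F f := by
  have := ratio_le_lipNorm (x₀ := x₀) f (x₀, x₀)
  simpa using this

lemma norm_sub_le_lipNorm (f : lip0 X x₀ F) (x y : X) :
    ‖toFun' f x - toFun' f y‖ ≤ lipNorm X x₀ F f * dist x y := by
  rcases eq_or_ne x y with rfl | h
  · simp
  · have := ratio_le_lipNorm (x₀ := x₀) f (x, y)
    rw [div_le_iff₀ (dist_pos.2 h)] at this
    simpa using this

instance : NormedAddCommGroup (lip0 X x₀ F) :=
  AddGroupNorm.toNormedAddCommGroup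
    { toFun := lipNorm X x₀ F
      map_zero' := by
        haveI : Nonempty (X × X) := nonempty_pairs x₀
        have h0 : ∀ p : X × X,
            ‖toFun' (0 : lip0 X x₀ F) p.1 - toFun' (0 : lip0 X x₀ F) p.2‖ /
              dist p.1 p.2 = 0 := by
          intro p; rw [toFun'_zero]; simp
        simp only [lipNorm, h0, ciSup_const]
      add_le' := by
        intro f g
        haveI : Nonempty (X × X) := nonempty_pairs x₀
        apply ciSup_le
        intro p
        rcases eq_or_ne p.1 p.2 with h | h
        · simp only [h, dist_self, div_zero]
          exact add_nonneg (lipNorm_nonneg f) (lipNorm_nonneg g)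
        · have hnum : ‖toFun' (f + g) p.1 - toFun' (f + g) p.2‖ ≤
              ‖toFun' f p.1 - toFun' f p.2‖ + ‖toFun' g p.1 - toFun' g p.2‖ := by
            rw [toFun'_add, Pi.add_apply, Pi.add_apply, add_sub_add_comm]
            exact norm_add_le _ _
          calc ‖toFun' (f + g) p.1 - toFun' (f + g) p.2‖ / dist p.1 p.2
              ≤ (‖toFun' f p.1 - toFun' f p.2‖ +
                  ‖toFun' g p.1 - toFun' g p.2‖) / dist p.1 p.2 := by gcongr
            _ = ‖toFun' f p.1 - toFun' f p.2‖ / dist p.1 p.2 +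
                  ‖toFun' g p.1 - toFun' g p.2‖ / dist p.1 p.2 := add_div _ _ _
            _ ≤ lipNorm X x₀ F f + lipNorm X x₀ F g :=
                add_le_add (ratio_le_lipNorm f p) (ratio_le_lipNorm g p)
      neg' := by
        intro f
        simp only [lipNorm]
        congr 1
        funext p
        congr 1
        rw [toFun'_neg, Pi.neg_apply, Pi.neg_apply, neg_sub_neg, norm_sub_rev]
      eq_zero_of_map_eq_zero' := by
        intro f hf
        have hzero : ∀ x : X, toFun' f x = 0 := by
          intro x
          rcases eq_or_ne x x₀ with h | h
          · rw [h]; exact apply_base f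
          · have hf' : lipNorm X x₀ F f = 0 := hf
            have h1 := ratio_le_lipNorm (x₀ := x₀) f (x, x₀)
            rw [hf', div_le_iff₀ (dist_pos.2 h), zero_mul] at h1
            have h2 : toFun' f x - toFun' f x₀ = 0 := by
              simpa using norm_le_zero_iff.1 h1
            have h3 := apply_base f
            rw [h3, sub_zero] at h2
            exact h2
        exact Subtype.ext (funext hzero) }

lemma lip0_norm_def (f : lip0 X x₀ F) : ‖f‖ = lipNorm X x₀ F f := rfl

instance : NormedSpace ℝ (lip0 X x₀ F) where
  norm_smul_le c f := by
    haveI : Nonempty (X × X) := nonempty_pairs x₀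
    rw [lip0_norm_def, lip0_norm_def, lipNorm]
    apply ciSup_le
    intro p
    have h1 : toFun' (c • f) p.1 - toFun' (c • f) p.2 =
        c • (toFun' f p.1 - toFun' f p.2) := by
      rw [toFun'_smul, Pi.smul_apply, Pi.smul_apply, smul_sub]
    rw [h1, norm_smul]
    rcases eq_or_ne p.1 p.2 with h | h
    · simp only [h, dist_self, div_zero]
      exact mul_nonneg (norm_nonneg c) (lipNorm_nonneg f)
    · rw [mul_div_assoc]
      exact mul_le_mul_of_nonneg_left (ratio_le_lipNorm (x₀ := x₀) f p) (norm_nonneg c)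

variable (X x₀ F)

/-- Elements of `Lip₀(X, F)` as continuous maps. -/
def toCM (f : lip0 X x₀ F) : C(X, F) :=
  ⟨toFun' f, by
    obtain ⟨K, hK⟩ := exists_lip f
    exact hK.continuous⟩

/-- The compact-open topology `τ₀` on `Lip₀(X, F)`. -/
def tau0 : TopologicalSpace (lip0 X x₀ F) :=
  TopologicalSpace.induced (toCM X x₀ F) ContinuousMap.compactOpen

/-- The set `γ(U) = ⋃ₙ (U₀ ∩ B + U₁ ∩ 2B + ⋯ + Uₙ ∩ 2ⁿB)` from the definition of the
mixed topology, where `B` is the closed unit ball of `Lip₀(X, F)`. -/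
def gammaSet (U : ℕ → Set (lip0 X x₀ F)) : Set (lip0 X x₀ F) :=
  ⋃ n : ℕ, ∑ i ∈ Finset.range (n + 1), (U i ∩ {f | ‖f‖ ≤ 2 ^ i})

/-- The mixed topology `τ_γ = γ[Lip, τ₀]` on `Lip₀(X, F)`: the topology whose
neighborhoods of a point `f` are generated by the translates by `f` of the sets `γ(U)`,
where `U` runs over all sequences of convex balanced `τ₀`-neighborhoods of zero. -/
def tauGamma : TopologicalSpace (lip0 X x₀ F) :=
  TopologicalSpace.mkOfNhds fun f =>
    ⨅ (U : ℕ → Set (lip0 X x₀ F))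
      (_ : ∀ n, U n ∈ @nhds _ (tau0 X x₀ F) 0 ∧ Convex ℝ (U n) ∧ Balanced ℝ (U n)),
      Filter.principal ((f + ·) '' gammaSet X x₀ F U)

/-- A subset of `Lip₀(X, F)` is norm bounded if the Lipschitz norms of its members are
uniformly bounded. -/
def NormBounded (B : Set (lip0 X x₀ F)) : Prop :=
  ∃ C : ℝ, ∀ f ∈ B, ‖f‖ ≤ C

/-- The locally convex topology `γτ_γ` on `Lip₀(X, F)`, generated by the seminorms
`f ↦ sup_n αₙ ‖f xₙ - f yₙ‖ / d(xₙ, yₙ)` where `(αₙ)` is a sequence of positive reals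
tending to zero and `((xₙ, yₙ))` is a sequence of pairs of distinct points of `X`. -/
def gammaTauGamma : TopologicalSpace (lip0 X x₀ F) :=
  ⨅ (α : ℕ → ℝ) (z : ℕ → X × X)
    (_ : (∀ n, 0 < α n) ∧ Filter.Tendsto α Filter.atTop (nhds 0) ∧
      ∀ n, (z n).1 ≠ (z n).2),
    TopologicalSpace.induced
      (fun f => UniformFun.ofFun fun n =>
        (α n / dist (z n).1 (z n).2) • (toFun' f (z n).1 - toFun' f (z n).2))
      inferInstance

/-- Evaluation at a point of `X`, as a linear functional on `Lip₀(X)`. -/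
def evalLM (x : X) : lip0 X x₀ ℝ →ₗ[ℝ] ℝ where
  toFun f := toFun' f x
  map_add' f g := rfl
  map_smul' c f := rfl

/-- Evaluation at a point of `X`, as a continuous linear functional on `Lip₀(X)`. -/
def evalCLM (x : X) : lip0 X x₀ ℝ →L[ℝ] ℝ :=
  LinearMap.mkContinuous (evalLM X x₀ x) (dist x x₀)
    (fun f => by
      have h0 : toFun' f x₀ = 0 := apply_base f
      have h := norm_sub_le_lipNorm (x₀ := x₀) f x x₀
      rw [h0, sub_zero] at h
      calc ‖evalLM X x₀ x f‖ ≤ lipNorm X x₀ ℝ f * dist x x₀ := h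
        _ = dist x x₀ * ‖f‖ := by rw [lip0_norm_def, mul_comm])

/-- The Lipschitz-free space `F(X)`: the closed linear span of the evaluation
functionals inside the dual of `Lip₀(X)`. -/
def freeSpace : Submodule ℝ (lip0 X x₀ ℝ →L[ℝ] ℝ) :=
  (Submodule.span ℝ (Set.range (evalCLM X x₀))).topologicalClosure

/-- The Dirac map `δ : X → F(X)`. -/
def deltaF (x : X) : freeSpace X x₀ :=
  ⟨evalCLM X x₀ x,
    Submodule.le_topologicalClosure _ (Submodule.subset_span (Set.mem_range_self x))⟩

/-- For a normed space `G`, the topology on the dual `G'` of uniform convergence on the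
convex balanced compact subsets of `G` (the topology of `G'_c`). -/
def dualcTop (G : Type*) [NormedAddCommGroup G] [NormedSpace ℝ G] :
    TopologicalSpace (G →L[ℝ] ℝ) :=
  TopologicalSpace.induced
    (fun φ => UniformOnFun.ofFun {L : Set G | IsCompact L ∧ Convex ℝ L ∧ Balanced ℝ L} ⇑φ)
    inferInstance


/-- The weak* topology `σ(Lip₀(X), F(X))` on `Lip₀(X)`. -/
def tauWeakStar (X : Type*) [MetricSpace X] (x₀ : X) :
    TopologicalSpace (lip0 X x₀ ℝ) :=
  TopologicalSpace.induced
    (fun f => fun φ : freeSpace X x₀ => φ.1 f) Pi.topologicalSpace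


open TopologicalSpace Metric
open scoped NNReal

section Subspace

variable {α : Type*} {t₁ t₂ : TopologicalSpace α} {B : Set α}

theorem induced_subtype_eq_of_nhdsWithin_le (h₁₂ : t₁ ≤ t₂)
    (h : ∀ f ∈ B, @nhdsWithin α t₂ f B ≤ @nhds α t₁ f) :
    induced ((↑) : B → α) t₁ = induced (↑) t₂ := by
  refine le_antisymm (induced_mono h₁₂) ((le_iff_nhds _ _).2 fun b => ?_)
  rw [@nhds_induced _ _ t₁, @nhds_induced _ _ t₂, ← @comap_nhdsWithin_range _ _ t₂,
    Subtype.range_coe]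
  exact comap_mono (h b b.2)

theorem exists_isOpen_inter_eq_of_induced_subtype_eq
    (h : induced ((↑) : B → α) t₁ = induced (↑) t₂) {u : Set α} (hu : IsOpen[t₁] u) :
    ∃ v, IsOpen[t₂] v ∧ v ∩ B = u ∩ B := by
  obtain ⟨v, hv, hvu⟩ : IsOpen[induced ((↑) : B → α) t₂] ((↑) ⁻¹' u) := h ▸ ⟨u, hu, rfl⟩
  exact ⟨v, hv, by simpa only [inter_comm B] using Subtype.preimage_coe_eq_preimage_coe_iff.1 hvu⟩

theorem isCompact_iff_of_induced_subtype_eq (h : induced ((↑) : B → α) t₁ = induced (↑) t₂) :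
    @IsCompact α t₁ B ↔ @IsCompact α t₂ B := by
  rw [@isCompact_iff_compactSpace _ t₁, @isCompact_iff_compactSpace _ t₂]
  exact iff_of_eq (congrArg (@CompactSpace B) h)

end Subspace

section DualTendsto

variable {𝕜 E ι : Type*} [NontriviallyNormedField 𝕜] [SeminormedAddCommGroup E]
  [NormedSpace 𝕜 E]

def tendstoApplySubmodule (l : Filter ι) (v : ι → E) (e : E) : Submodule 𝕜 (E →L[𝕜] 𝕜) where
  carrier := {ψ | Tendsto (fun i => ψ (v i)) l (𝓝 (ψ e))}
  add_mem' hψ hψ' := hψ.add hψ'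
  zero_mem' := tendsto_const_nhds
  smul_mem' c _ hψ := hψ.const_smul c

theorem isClosed_tendstoApplySubmodule {l : Filter ι} {v : ι → E} (e : E) {C : ℝ}
    (hv : ∀ᶠ i in l, ‖v i‖ ≤ C) :
    IsClosed (tendstoApplySubmodule (𝕜 := 𝕜) l v e : Set (E →L[𝕜] 𝕜)) := by
  let ι' := {i // ‖v i‖ ≤ C}
  have hl : map ((↑) : ι' → ι) (comap (↑) l) = l :=
    map_comap_of_mem (by rwa [Subtype.range_coe_subtype])
  have hequi : Equicontinuous fun (i : ι') (ψ : E →L[𝕜] 𝕜) => ψ (v i) := by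
    refine (LipschitzWith.uniformEquicontinuous _ C.toNNReal fun i => ?_).equicontinuous
    refine LipschitzWith.of_dist_le_mul fun ψ ψ' => ?_
    rw [dist_eq_norm, dist_eq_norm, ← sub_apply, mul_comm]
    exact ((ψ - ψ').le_opNorm _).trans (by gcongr; exact i.2.trans (Real.le_coe_toNNReal C))
  have := hequi.isClosed_setOfPred_tendsto (l := comap (↑) l) (f := fun ψ => ψ e) (by fun_prop)
  rw [← hl]
  simpa only [SetLike.coe, tendstoApplySubmodule, tendsto_map'_iff, Function.comp_def] using this

end DualTendsto

section Lip0

variable {X x₀ F}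

def toFunₗ : lip0 X x₀ F →ₗ[ℝ] X → F := (lip0Submodule X x₀ F).subtype

lemma toFun'_sum {ι : Type*} (t : Finset ι) (g : ι → lip0 X x₀ F) :
    toFun' (∑ i ∈ t, g i) = ∑ i ∈ t, toFun' (g i) :=
  map_sum (toFunₗ : lip0 X x₀ F →ₗ[ℝ] X → F) g t

theorem norm_le_iff_lipschitzWith {f : lip0 X x₀ F} {r : ℝ≥0} :
    ‖f‖ ≤ r ↔ LipschitzWith r (toFun' f) := by
  refine ⟨fun h => LipschitzWith.of_dist_le_mul fun x y => ?_, fun h => ?_⟩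
  · rw [dist_eq_norm]
    exact (norm_sub_le_lipNorm f x y).trans (by gcongr; exact h)
  · have := nonempty_pairs x₀
    exact ciSup_le (ratio_le f h)

theorem lipschitzWith_of_norm_le {f : lip0 X x₀ F} {C : ℝ} (h : ‖f‖ ≤ C) :
    LipschitzWith C.toNNReal (toFun' f) :=
  norm_le_iff_lipschitzWith.1 (h.trans (Real.le_coe_toNNReal C))

variable (X x₀ F) in
def tauPt : TopologicalSpace (lip0 X x₀ F) :=
  TopologicalSpace.induced toFun' Pi.topologicalSpace

theorem induced_tau0_eq_tauPt {B : Set (lip0 X x₀ F)} (hB : NormBounded X x₀ F B) :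
    induced ((↑) : B → lip0 X x₀ F) (tau0 X x₀ F) = induced (↑) (tauPt X x₀ F) := by
  obtain ⟨C, hC⟩ := hB
  let _ : TopologicalSpace B := induced (↑) (tau0 X x₀ F)
  have hequi : Equicontinuous fun g : B => toFun' (g : lip0 X x₀ F) :=
    (LipschitzWith.uniformEquicontinuous _ _ fun g : B =>
      lipschitzWith_of_norm_le (hC g g.2)).equicontinuous
  have hind : IsInducing fun g : B => UniformOnFun.ofFun {K | IsCompact K} (toFun' g.1) := by
    refine ⟨?_⟩
    change induced ((↑) : B → _) (induced (toCM X x₀ F) ContinuousMap.compactOpen) = _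
    have hco : (ContinuousMap.compactOpen : TopologicalSpace C(X, F)) =
        induced (fun f : C(X, F) => UniformOnFun.ofFun {K | IsCompact K} ⇑f) inferInstance :=
      ContinuousMap.isUniformEmbedding_toUniformOnFunIsCompact.isInducing.eq_induced
    rw [hco, induced_compose, induced_compose]
    rfl
  have := ((EquicontinuousOn.isInducing_uniformOnFun_iff_pi
    (sUnion_eq_univ_iff.2 fun x => ⟨{x}, isCompact_singleton, rfl⟩)
    (fun _ hK => hK) fun K _ => hequi.equicontinuousOn K).1 hind).eq_induced
  exact this.trans induced_compose.symm

def toCMHom : lip0 X x₀ F →+ C(X, F) where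
  toFun := toCM X x₀ F
  map_zero' := rfl
  map_add' _ _ := rfl

variable (X x₀ F) in
theorem isTopologicalAddGroup_tau0 : @IsTopologicalAddGroup _ (tau0 X x₀ F) _ :=
  topologicalAddGroup_induced (toCMHom (X := X) (x₀ := x₀) (F := F))

def smallOn (K : Set X) (ε : ℝ) : Set (lip0 X x₀ F) := {f | ∀ x ∈ K, ‖toFun' f x‖ < ε}

theorem nhds_zero_basis_smallOn :
    (@nhds _ (tau0 X x₀ F) 0).HasBasis (fun p : Set X × ℝ => IsCompact p.1 ∧ 0 < p.2)
      (fun p => smallOn p.1 p.2) := by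
  rw [show @nhds _ (tau0 X x₀ F) 0 = comap (toCM X x₀ F) (𝓝 (toCM X x₀ F 0)) from
    nhds_induced _ _]
  refine ((nhds_basis_uniformity' Metric.uniformity_basis_dist.compactConvergenceUniformity).comap
    _).congr (fun _ => Iff.rfl) fun p _ => ?_
  ext f
  simp [smallOn, toCM, UniformSpace.ball, toFun'_zero]

theorem convex_smallOn (K : Set X) (ε : ℝ) : Convex ℝ (smallOn (x₀ := x₀) (F := F) K ε) :=
  fun _ hf _ hg _ _ ha hb hab x hx =>
    mem_ball_zero_iff.1 (convex_ball 0 ε (mem_ball_zero_iff.2 (hf x hx))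
      (mem_ball_zero_iff.2 (hg x hx)) ha hb hab)

theorem balanced_smallOn (K : Set X) (ε : ℝ) : Balanced ℝ (smallOn (x₀ := x₀) (F := F) K ε) := by
  rintro a ha _ ⟨f, hf, rfl⟩ x hx
  exact mem_ball_zero_iff.1 ((balanced_ball_zero).smul_mem ha (mem_ball_zero_iff.2 (hf x hx)))

theorem isCompact_closedBall_tau0 [ProperSpace F] {r : ℝ} (hr : 0 ≤ r) :
    @IsCompact _ (tau0 X x₀ F) (closedBall 0 r) := by
  refine (isCompact_iff_of_induced_subtype_eq (induced_tau0_eq_tauPt ⟨r, fun f hf => ?_⟩)).2 ?_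
  · exact mem_closedBall_zero_iff.1 hf
  let _ := tauPt X x₀ F
  have hS : toFun' '' closedBall (0 : lip0 X x₀ F) r =
      {u : X → F | LipschitzWith ⟨r, hr⟩ u} ∩ {u | u x₀ = 0} := by
    ext u
    refine ⟨?_, fun ⟨hu, hu0⟩ => ⟨⟨u, ⟨_, hu⟩, hu0⟩, ?_, rfl⟩⟩
    · rintro ⟨f, hf, rfl⟩
      exact ⟨norm_le_iff_lipschitzWith.1 (mem_closedBall_zero_iff.1 hf), apply_base f⟩
    · exact mem_closedBall_zero_iff.2 ((norm_le_iff_lipschitzWith (f := ⟨u, ⟨_, hu⟩, hu0⟩)).2 hu)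
  have hbox : toFun' '' closedBall (0 : lip0 X x₀ F) r ⊆
      univ.pi fun x => closedBall (0 : F) (r * dist x x₀) := by
    rintro _ ⟨f, hf, rfl⟩ x -
    rw [mem_closedBall_zero_iff, ← sub_zero (toFun' f x), ← apply_base f, ← dist_eq_norm]
    exact (norm_le_iff_lipschitzWith (r := ⟨r, hr⟩)).1 (mem_closedBall_zero_iff.1 hf)
      |>.dist_le_mul x x₀
  refine (IsInducing.induced toFun').isCompact_iff.2 ?_
  refine (isCompact_univ_pi fun x => isCompact_closedBall _ _).of_isClosed_subset ?_ hbox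
  rw [hS]
  exact (isClosed_setOfPred_lipschitzWith _).inter (isClosed_eq (continuous_apply x₀)
    continuous_const)

def IsConvexBalancedNhd (U : Set (lip0 X x₀ F)) : Prop :=
  U ∈ @nhds _ (tau0 X x₀ F) 0 ∧ Convex ℝ U ∧ Balanced ℝ U

def gammaNhds (f : lip0 X x₀ F) : Filter (lip0 X x₀ F) :=
  ⨅ (U : ℕ → Set (lip0 X x₀ F)) (_ : ∀ n, IsConvexBalancedNhd (U n)),
    𝓟 ((f + ·) '' gammaSet X x₀ F U)

theorem isOpen_tauGamma_iff {s : Set (lip0 X x₀ F)} :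
    IsOpen[tauGamma X x₀ F] s ↔ ∀ f ∈ s, s ∈ gammaNhds f :=
  Iff.rfl

theorem gammaNhds_le_nhds (f : lip0 X x₀ F) : gammaNhds f ≤ @nhds _ (tauGamma X x₀ F) f :=
  (@nhds_basis_opens _ (tauGamma X x₀ F) f).ge_iff.2 fun _ ⟨hf, hV⟩ => hV f hf

theorem gammaSet_mono {U V : ℕ → Set (lip0 X x₀ F)} (h : ∀ n, U n ⊆ V n) :
    gammaSet X x₀ F U ⊆ gammaSet X x₀ F V :=
  iUnion_mono fun _ => finsetSum_subset_finsetSum _ _ _ fun i _ => inter_subset_inter_left _ (h i)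

theorem gammaNhds_hasBasis (f : lip0 X x₀ F) :
    (gammaNhds f).HasBasis (fun U : ℕ → Set (lip0 X x₀ F) => ∀ n, IsConvexBalancedNhd (U n))
      fun U => (f + ·) '' gammaSet X x₀ F U := by
  refine hasBasis_biInf_principal' (fun U hU V hV => ⟨fun n => U n ∩ V n, fun n => ?_,
    image_mono (gammaSet_mono fun n => inter_subset_left),
    image_mono (gammaSet_mono fun n => inter_subset_right)⟩)
    ⟨fun _ => univ, fun _ => ⟨univ_mem, convex_univ, balanced_univ⟩⟩
  exact ⟨inter_mem (hU n).1 (hV n).1, (hU n).2.1.inter (hV n).2.1, (hU n).2.2.inter (hV n).2.2⟩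

theorem gammaSet_smallOn_subset {K : Set X} {ε : ℝ} (hε : 0 < ε) :
    gammaSet X x₀ F (fun n => smallOn K (ε / 2 ^ (n + 1))) ⊆ smallOn K ε := by
  rintro _ ⟨_, ⟨n, rfl⟩, hf⟩ x hx
  obtain ⟨g, hg, rfl⟩ := (mem_finsetSum _ _ _).1 hf
  rw [toFun'_sum, Finset.sum_apply]
  calc ‖∑ i ∈ Finset.range (n + 1), toFun' (g i) x‖
      ≤ ∑ i ∈ Finset.range (n + 1), ‖toFun' (g i) x‖ := norm_sum_le _ _
    _ < ∑ i ∈ Finset.range (n + 1), ε / 2 * (1 / 2) ^ i :=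
      Finset.sum_lt_sum_of_nonempty Finset.nonempty_range_add_one fun i hi =>
        ((hg hi).1 x hx).trans_eq (by rw [one_div, inv_pow, pow_succ]; ring)
    _ ≤ ε / 2 * 2 := by rw [← Finset.mul_sum]; gcongr; exact sum_geometric_two_le _
    _ = ε := by ring

theorem tauGamma_le_tau0 : tauGamma X x₀ F ≤ tau0 X x₀ F := by
  let _ := tau0 X x₀ F
  have := isTopologicalAddGroup_tau0 X x₀ F
  refine fun s hs => isOpen_tauGamma_iff.2 fun f hf => ?_
  have : (f + ·) ⁻¹' s ∈ 𝓝 0 := (continuous_const_add f).isOpen_preimage s hs |>.mem_nhds (by simpa)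
  obtain ⟨⟨K, ε⟩, ⟨hK, hε⟩, hsub⟩ := nhds_zero_basis_smallOn.mem_iff.1 this
  refine (gammaNhds_hasBasis f).mem_iff.2 ⟨fun n => smallOn K (ε / 2 ^ (n + 1)), fun n =>
    ⟨nhds_zero_basis_smallOn.mem_of_mem (i := (K, _)) ⟨hK, by positivity⟩, convex_smallOn _ _,
      balanced_smallOn _ _⟩, ?_⟩
  exact image_subset_iff.2 ((gammaSet_smallOn_subset hε).trans hsub)

theorem mem_gammaSet_of_mem {U : ℕ → Set (lip0 X x₀ F)} (hU : ∀ n, (0 : lip0 X x₀ F) ∈ U n)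
    {m : ℕ} {g : lip0 X x₀ F} (hg : g ∈ U m) (hgm : ‖g‖ ≤ 2 ^ m) : g ∈ gammaSet X x₀ F U := by
  classical
  refine mem_iUnion.2 ⟨m, ?_⟩
  convert finsetSum_mem_finsetSum _ _ (fun i => if i = m then g else 0) fun i _ => ?_
  · simp
  · split_ifs with h
    · exact h ▸ ⟨hg, hgm⟩
    · exact ⟨hU i, by simp⟩

theorem nhdsWithin_tau0_le_nhds_tauGamma {B : Set (lip0 X x₀ F)} (hB : NormBounded X x₀ F B)
    {f : lip0 X x₀ F} (hf : f ∈ B) :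
    @nhdsWithin _ (tau0 X x₀ F) f B ≤ @nhds _ (tauGamma X x₀ F) f := by
  let _ := tau0 X x₀ F
  have := isTopologicalAddGroup_tau0 X x₀ F
  obtain ⟨C, hC⟩ := hB
  intro N hN
  obtain ⟨U, hU, hUN⟩ := (gammaNhds_hasBasis f).mem_iff.1 (gammaNhds_le_nhds f hN)
  obtain ⟨m, hm⟩ := pow_unbounded_of_one_lt (C + C) one_lt_two
  have hsub : ∀ᶠ g in 𝓝 f, g - f ∈ U m :=
    ((continuous_sub_right f).tendsto' f 0 (sub_self f)).eventually (hU m).1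
  filter_upwards [mem_nhdsWithin_of_mem_nhds hsub, self_mem_nhdsWithin] with g hgU hgB
  refine hUN ⟨g - f, mem_gammaSet_of_mem (fun n => mem_of_mem_nhds (hU n).1) hgU ?_, by simp⟩
  exact (norm_sub_le g f).trans ((add_le_add (hC g hgB) (hC f hf)).trans hm.le)

theorem induced_tauGamma_eq_tau0 {B : Set (lip0 X x₀ F)} (hB : NormBounded X x₀ F B) :
    induced ((↑) : B → lip0 X x₀ F) (tauGamma X x₀ F) = induced (↑) (tau0 X x₀ F) :=
  induced_subtype_eq_of_nhdsWithin_le tauGamma_le_tau0 fun _ hf =>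
    nhdsWithin_tau0_le_nhds_tauGamma hB hf

def IsTau0OpenOnBalls (s : Set (lip0 X x₀ F)) : Prop :=
  ∀ r, ∃ V, IsOpen[tau0 X x₀ F] V ∧ V ∩ closedBall 0 r = s ∩ closedBall 0 r

theorem IsTau0OpenOnBalls.preimage_add {s : Set (lip0 X x₀ F)} (hs : IsTau0OpenOnBalls s)
    (f : lip0 X x₀ F) : IsTau0OpenOnBalls ((f + ·) ⁻¹' s) := by
  let _ := tau0 X x₀ F
  have := isTopologicalAddGroup_tau0 X x₀ F
  intro r
  obtain ⟨V, hV, hVs⟩ := hs (‖f‖ + r)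
  refine ⟨(f + ·) ⁻¹' V, (continuous_const_add f).isOpen_preimage V hV, ?_⟩
  ext g
  refine and_congr_left fun hg => ?_
  have hfg : f + g ∈ closedBall 0 (‖f‖ + r) := mem_closedBall_zero_iff.2 <|
    (norm_add_le f g).trans (by gcongr; exact mem_closedBall_zero_iff.1 hg)
  simpa [hfg] using Set.ext_iff.1 hVs (f + g)

theorem IsTau0OpenOnBalls.exists_add_closure_inter_closedBall_subset {s C : Set (lip0 X x₀ F)}
    (hs : IsTau0OpenOnBalls s) (hC : @IsCompact _ (tau0 X x₀ F) C) (hCs : C ⊆ s) {m r : ℝ}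
    (hCm : C ⊆ closedBall 0 m) (hr : 0 ≤ r) :
    ∃ U, IsConvexBalancedNhd U ∧ C + (closure[tau0 X x₀ F] U ∩ closedBall 0 r) ⊆ s := by
  let _ := tau0 X x₀ F
  have := isTopologicalAddGroup_tau0 X x₀ F
  obtain ⟨V, hV, hVs⟩ := hs (m + r)
  have hCV : C ⊆ V := fun c hc => (hVs.symm.subset
    ⟨hCs hc, closedBall_subset_closedBall (le_add_of_nonneg_right hr) (hCm hc)⟩).1
  obtain ⟨W, hW, hCW⟩ := compact_open_separated_add_right hC hV hCV
  obtain ⟨W', hW', hW'c, hW'W⟩ := exists_mem_nhds_isClosed_subset hW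
  obtain ⟨⟨K, ε⟩, ⟨hK, hε⟩, hKW'⟩ := nhds_zero_basis_smallOn.mem_iff.1 hW'
  refine ⟨smallOn K ε, ⟨nhds_zero_basis_smallOn.mem_of_mem (i := (K, ε)) ⟨hK, hε⟩,
    convex_smallOn _ _, balanced_smallOn _ _⟩, ?_⟩
  rintro _ ⟨c, hc, w, ⟨hw, hwr⟩, rfl⟩
  have hcw : c + w ∈ closedBall 0 (m + r) := mem_closedBall_zero_iff.2 <| (norm_add_le c w).trans
    (add_le_add (mem_closedBall_zero_iff.1 (hCm hc)) (mem_closedBall_zero_iff.1 hwr))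
  exact (hVs.subset ⟨hCW (add_mem_add hc (hW'W (closure_minimal hKW' hW'c hw))), hcw⟩).1

theorem exists_gammaSet_subset [ProperSpace F] {s : Set (lip0 X x₀ F)}
    (hs : IsTau0OpenOnBalls s) (h0 : 0 ∈ s) :
    ∃ U : ℕ → Set (lip0 X x₀ F), (∀ n, IsConvexBalancedNhd (U n)) ∧ gammaSet X x₀ F U ⊆ s := by
  let _ := tau0 X x₀ F
  have := isTopologicalAddGroup_tau0 X x₀ F
  -- stated with the hypotheses after `∃ U` so that `choose` gives `U n C` for every `C`
  have step (n : ℕ) (C : Set (lip0 X x₀ F)) : ∃ U, IsCompact C → C ⊆ s →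
      C ⊆ closedBall 0 (2 ^ n) →
      IsConvexBalancedNhd U ∧ C + (closure U ∩ closedBall 0 (2 ^ n)) ⊆ s := by
    by_cases hC : IsCompact C ∧ C ⊆ s ∧ C ⊆ closedBall 0 (2 ^ n)
    · obtain ⟨U, hU⟩ := hs.exists_add_closure_inter_closedBall_subset hC.1 hC.2.1 hC.2.2
        (r := 2 ^ n) (by positivity)
      exact ⟨U, fun _ _ _ => hU⟩
    · exact ⟨∅, fun h₁ h₂ h₃ => absurd ⟨h₁, h₂, h₃⟩ hC⟩
  choose U hU using step
  let C : ℕ → Set (lip0 X x₀ F) := fun n =>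
    Nat.rec {0} (fun n Cn => Cn + (closure (U n Cn) ∩ closedBall 0 (2 ^ n))) n
  have hC (n : ℕ) : IsCompact (C n) ∧ C n ⊆ s ∧ C n ⊆ closedBall 0 (2 ^ n) := by
    induction n with
    | zero => exact ⟨isCompact_singleton, singleton_subset_iff.2 h0,
        singleton_subset_iff.2 (mem_closedBall_self zero_le_one)⟩
    | succ n ih =>
      refine ⟨ih.1.add ((isCompact_closedBall_tau0 (by positivity)).inter_left isClosed_closure),
        (hU n (C n) ih.1 ih.2.1 ih.2.2).2, ?_⟩
      rintro _ ⟨c, hc, d, hd, rfl⟩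
      rw [mem_closedBall_zero_iff, pow_succ, mul_two]
      exact (norm_add_le c d).trans (add_le_add (mem_closedBall_zero_iff.1 (ih.2.2 hc))
        (mem_closedBall_zero_iff.1 hd.2))
  have hsum (n : ℕ) : ∑ i ∈ Finset.range n, (U i (C i) ∩ {f | ‖f‖ ≤ 2 ^ i}) ⊆ C n := by
    induction n with
    | zero => simp [C]
    | succ n ih =>
      rw [Finset.sum_range_succ]
      exact add_subset_add ih
        (inter_subset_inter subset_closure fun f hf => mem_closedBall_zero_iff.2 hf)
  refine ⟨fun n => U n (C n), fun n => (hU n (C n) (hC n).1 (hC n).2.1 (hC n).2.2).1, ?_⟩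
  rintro _ ⟨_, ⟨n, rfl⟩, hf⟩
  exact (hC (n + 1)).2.1 (hsum (n + 1) hf)

theorem tauGamma_le_of_induced_eq [ProperSpace F] {t : TopologicalSpace (lip0 X x₀ F)}
    (ht : ∀ B : Set (lip0 X x₀ F), NormBounded X x₀ F B →
      induced ((↑) : B → lip0 X x₀ F) t = induced (↑) (tau0 X x₀ F)) :
    tauGamma X x₀ F ≤ t := by
  refine fun u hu => isOpen_tauGamma_iff.2 fun f hf => ?_
  have hopen : IsTau0OpenOnBalls u := fun r => exists_isOpen_inter_eq_of_induced_subtype_eq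
    (ht _ ⟨r, fun _ => mem_closedBall_zero_iff.1⟩) hu
  obtain ⟨U, hU, hUu⟩ := exists_gammaSet_subset (hopen.preimage_add f) (by simpa)
  exact (gammaNhds_hasBasis f).mem_iff.2 ⟨U, hU, image_subset_iff.2 hUu⟩

theorem tauWeakStar_le_tauPt : tauWeakStar X x₀ ≤ tauPt X x₀ ℝ :=
  (induced_mono (continuous_iff_le_induced.1
    (continuous_pi fun x => continuous_apply (deltaF X x₀ x)))).trans_eq induced_compose

theorem nhdsWithin_tauPt_le_nhds_tauWeakStar {B : Set (lip0 X x₀ ℝ)}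
    (hB : NormBounded X x₀ ℝ B) (f : lip0 X x₀ ℝ) :
    @nhdsWithin _ (tauPt X x₀ ℝ) f B ≤ @nhds _ (tauWeakStar X x₀) f := by
  obtain ⟨C, hC⟩ := hB
  let _ := tauPt X x₀ ℝ
  rw [show @nhds _ (tauWeakStar X x₀) f = comap _ (𝓝 _) from nhds_induced _ _,
    ← tendsto_iff_comap, tendsto_pi_nhds]
  intro φ
  have hevals : Submodule.span ℝ (range (evalCLM X x₀)) ≤
      tendstoApplySubmodule (𝓝[B] f) id f :=
    Submodule.span_le.2 <| range_subset_iff.2 fun x =>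
      (((continuous_apply x).comp continuous_induced_dom).tendsto f).mono_left nhdsWithin_le_nhds
  exact Submodule.topologicalClosure_minimal _ hevals
    (isClosed_tendstoApplySubmodule f (eventually_nhdsWithin_of_forall hC)) φ.2

theorem induced_tauWeakStar_eq_tauPt {B : Set (lip0 X x₀ ℝ)} (hB : NormBounded X x₀ ℝ B) :
    induced ((↑) : B → lip0 X x₀ ℝ) (tauWeakStar X x₀) = induced (↑) (tauPt X x₀ ℝ) :=
  induced_subtype_eq_of_nhdsWithin_le tauWeakStar_le_tauPt fun f _ =>
    nhdsWithin_tauPt_le_nhds_tauWeakStar hB f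

end Lip0

/-- On `Lip₀(X)`, the bounded weak* topology `τ_bw*` — the largest
(finest) topology agreeing with the weak* topology `σ(Lip₀(X), F(X))` on norm-bounded
sets — coincides with the topology `τ_γ`. -/
theorem stmt9 (X : Type*) [MetricSpace X] (x₀ : X) :
    IsLeast
      {t : TopologicalSpace (lip0 X x₀ ℝ) |
        ∀ B : Set (lip0 X x₀ ℝ), NormBounded X x₀ ℝ B →
          TopologicalSpace.induced ((↑) : B → lip0 X x₀ ℝ) t =
            TopologicalSpace.induced ((↑) : B → lip0 X x₀ ℝ) (tauWeakStar X x₀)}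
      (tauGamma X x₀ ℝ) := by
  have tau0_eq_weakStar (B : Set (lip0 X x₀ ℝ)) (hB : NormBounded X x₀ ℝ B) :
      induced ((↑) : B → lip0 X x₀ ℝ) (tau0 X x₀ ℝ) = induced (↑) (tauWeakStar X x₀) :=
    (induced_tau0_eq_tauPt hB).trans (induced_tauWeakStar_eq_tauPt hB).symm
  exact ⟨fun B hB => (induced_tauGamma_eq_tau0 hB).trans (tau0_eq_weakStar B hB),
    fun t ht => tauGamma_le_of_induced_eq fun B hB => (ht B hB).trans (tau0_eq_weakStar B hB).symm⟩

end LipApprox
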